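/- Let G=(V,E) be a finite simple graph in which every vertex has degree at least 1. Then for any two disjoint nonempty subsets S₁, S₂ ⊆ V, it holds that max{β_G(S₁), β_G(S₂)} ≥ φ_G. -/
import Mathlib


open scoped Classical
open Matrix

noncomputable section

namespace Sublinear

variable {V : Type*}

/-- The degree `d(v)` of a vertex, as a real number. -/
def deg [Fintype V] (G : SimpleGraph V) (v : V) : ℝ :=
  ((Finset.univ.filter fun u => G.Adj v u).card : ℝ)

/-- The volume `μ_G(S)` of a set of vertices. -/
def vol [Fintype V] (G : SimpleGraph V) (S : Set V) : ℝ :=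
  ∑ v ∈ Finset.univ.filter (fun v => v ∈ S), deg G v

/-- The number of ordered adjacent pairs `(u,v)` with `u ∈ S`, `v ∈ T`.
For disjoint `S`, `T` this equals the number `e_G(S,T)` of edges between `S` and `T`. -/
def eB [Fintype V] (G : SimpleGraph V) (S T : Set V) : ℝ :=
  (((Finset.univ : Finset (V × V)).filter
      fun p => p.1 ∈ S ∧ p.2 ∈ T ∧ G.Adj p.1 p.2).card : ℝ)

/-- The number `e_G(S)` of edges with both endpoints in `S`. -/
def eIn [Fintype V] (G : SimpleGraph V) (S : Set V) : ℝ := eB G S S / 2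

/-- The conductance `φ_G(S)` of a set of vertices. -/
def cond [Fintype V] (G : SimpleGraph V) (S : Set V) : ℝ :=
  eB G S Sᶜ / vol G S

/-- The conductance `φ_G` of the graph: the minimum of `φ_G(S)` over nonempty `S`
with `μ_G(S) ≤ μ_G/2`. -/
def conductance [Fintype V] (G : SimpleGraph V) : ℝ :=
  sInf {x | ∃ S : Set V, S.Nonempty ∧ vol G S ≤ vol G Set.univ / 2 ∧ x = cond G S}

/-- The bipartiteness ratio `β_G(L,R)` of a pair of disjoint sets. -/
def bipRatio [Fintype V] (G : SimpleGraph V) (L R : Set V) : ℝ :=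
  (2 * eIn G L + 2 * eIn G R + eB G (L ∪ R) (L ∪ R)ᶜ) / vol G (L ∪ R)

/-- The bipartiteness ratio `β_G(S)` of a set: the minimum of `β_G(L,R)` over
partitions `(L,R)` of `S`. -/
def bipS [Fintype V] (G : SimpleGraph V) (S : Set V) : ℝ :=
  sInf {x | ∃ L R : Set V, Disjoint L R ∧ L ∪ R = S ∧ x = bipRatio G L R}

/-- The bipartiteness ratio `β_G` of the graph: the minimum of `β_G(S)` over
nonempty sets `S`. -/
def bip [Fintype V] (G : SimpleGraph V) : ℝ :=
  sInf {x | ∃ S : Set V, S.Nonempty ∧ x = bipS G S}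

/-- The maximum cut value `MC(G)`: the maximum over sets `S` of the fraction of
edges cut by the bipartition `(S, Sᶜ)`. -/
def maxCut [Fintype V] (G : SimpleGraph V) : ℝ :=
  sSup {x | ∃ S : Set V, x = eB G S Sᶜ / eIn G Set.univ}

lemma eB_nonneg [Fintype V] (G : SimpleGraph V) (S T : Set V) : 0 ≤ eB G S T := by
  unfold eB; positivity

lemma eIn_nonneg [Fintype V] (G : SimpleGraph V) (S : Set V) : 0 ≤ eIn G S := by
  unfold eIn; have := eB_nonneg G S S; linarith

lemma vol_pos [Fintype V] (G : SimpleGraph V) (hdeg : ∀ v, 1 ≤ deg G v)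
    {S : Set V} (hS : S.Nonempty) : 0 < vol G S := by
  obtain ⟨v, hv⟩ := hS
  have hmem : v ∈ Finset.univ.filter (fun v => v ∈ S) := by simp [hv]
  have : (1 : ℝ) ≤ ∑ v ∈ Finset.univ.filter (fun v => v ∈ S), deg G v := by
    calc (1:ℝ) ≤ deg G v := hdeg v
    _ ≤ _ := Finset.single_le_sum (fun u _ => le_trans zero_le_one (hdeg u)) hmem
  unfold vol; linarith

lemma cond_le_bipS [Fintype V] (G : SimpleGraph V) (hdeg : ∀ v, 1 ≤ deg G v)
    {S : Set V} (hS : S.Nonempty) : cond G S ≤ bipS G S := by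
  apply le_csInf
  · exact ⟨bipRatio G S ∅, S, ∅, Set.disjoint_empty S, Set.union_empty S, rfl⟩
  · rintro x ⟨L, R, hLR, hU, rfl⟩
    have hv := vol_pos G hdeg hS
    unfold cond bipRatio
    rw [hU]
    have h1 := eIn_nonneg G L
    have h2 := eIn_nonneg G R
    gcongr
    linarith

lemma conductance_le_cond [Fintype V] (G : SimpleGraph V) (hdeg : ∀ v, 1 ≤ deg G v)
    {S : Set V} (hS : S.Nonempty) (hvol : vol G S ≤ vol G Set.univ / 2) :
    conductance G ≤ cond G S := by
  apply csInf_le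
  · refine ⟨0, ?_⟩
    rintro x ⟨T, hT, _, rfl⟩
    exact div_nonneg (eB_nonneg G T Tᶜ) (le_of_lt (vol_pos G hdeg hT))
  · exact ⟨S, hS, hvol, rfl⟩

lemma vol_add_le [Fintype V] (G : SimpleGraph V) (hdeg : ∀ v, 1 ≤ deg G v)
    {S₁ S₂ : Set V} (hdisj : Disjoint S₁ S₂) :
    vol G S₁ + vol G S₂ ≤ vol G Set.univ := by
  unfold vol
  rw [← Finset.sum_union]
  · apply Finset.sum_le_sum_of_subset_of_nonneg
    · intro v _; simp
    · intro v _ _; exact le_trans zero_le_one (hdeg v)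
  · rw [Finset.disjoint_filter]
    intro v _ h1 h2
    exact (Set.disjoint_left.mp hdisj h1) h2

/-- For any two disjoint nonempty subsets `S₁, S₂` of the vertices
of `G`, `max {β_G(S₁), β_G(S₂)} ≥ φ_G`. -/
theorem max_bipartiteness_ratio_ge_conductance
    {V : Type*} [Fintype V] (G : SimpleGraph V)
    (hdeg : ∀ v, 1 ≤ deg G v)
    (S₁ S₂ : Set V) (h₁ : S₁.Nonempty) (h₂ : S₂.Nonempty)
    (hdisj : Disjoint S₁ S₂) :
    conductance G ≤ max (bipS G S₁) (bipS G S₂) := by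
  have hsum := vol_add_le G hdeg hdisj
  rcases le_total (vol G S₁) (vol G S₂) with h | h
  · have hv : vol G S₁ ≤ vol G Set.univ / 2 := by linarith
    exact le_trans (le_trans (conductance_le_cond G hdeg h₁ hv)
      (cond_le_bipS G hdeg h₁)) (le_max_left _ _)
  · have hv : vol G S₂ ≤ vol G Set.univ / 2 := by linarith
    exact le_trans (le_trans (conductance_le_cond G hdeg h₂ hv)
      (cond_le_bipS G hdeg h₂)) (le_max_right _ _)

end Sublinear
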